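/- Let Γ be an infinite virtually cyclic group acting freely and minimally by homeomorphisms on a nonempty compact Hausdorff space X. Then the dynamic asymptotic dimension of the action equals 1. -/

import Mathlib

open Pointwise

/-- The set F(U,E): elements `g = gₙ⋯g₁` with each `gⱼ ∈ E` such that for some `x ∈ U`
all partial translates `gⱼ⋯g₁ • x` (j = 1,…,n) remain in `U`. -/
def dynF {Γ X : Type*} [Group Γ] [MulAction Γ X] (U : Set X) (E : Set Γ) : Set Γ :=
  {g | ∃ L : List Γ, L ≠ [] ∧ (∀ h ∈ L, h ∈ E) ∧ g = L.reverse.prod ∧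
    ∃ x ∈ U, ∀ j : ℕ, 1 ≤ j → j ≤ L.length → (L.take j).reverse.prod • x ∈ U}

/-- The marker property for an action. -/
def MarkerProperty (Γ X : Type*) [Group Γ] [MulAction Γ X] [TopologicalSpace X] : Prop :=
  ∀ F : Finset Γ, ∃ U : Set X, IsOpen U ∧
    (F : Set Γ).PairwiseDisjoint (fun g => g • U) ∧ (⋃ g : Γ, g • U) = Set.univ

/-- The dynamic asymptotic dimension is at most `d`. -/
def DadLE (Γ X : Type*) [Group Γ] [MulAction Γ X] [TopologicalSpace X] (d : ℕ) : Prop :=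
  ∀ E : Finset Γ, ∃ U : Fin (d + 1) → Set X, (∀ i, IsOpen (U i)) ∧
    (⋃ i, U i) = Set.univ ∧ ∀ i, (dynF (U i) (E : Set Γ)).Finite

/-- The dynamic asymptotic dimension, as an extended natural number (`⊤` if no `d` works). -/
noncomputable def dad (Γ X : Type*) [Group Γ] [MulAction Γ X] [TopologicalSpace X] : ℕ∞ :=
  sInf ((fun d : ℕ => (d : ℕ∞)) '' {d : ℕ | DadLE Γ X d})

/-- A group is virtually cyclic if it has a cyclic subgroup of finite index. -/
def IsVirtuallyCyclic (Γ : Type*) [Group Γ] : Prop :=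
  ∃ H : Subgroup Γ, IsCyclic H ∧ H.FiniteIndex

/-- The covering dimension of `X` is at most `n`: every open cover admits an open
refinement covering `X` in which every point belongs to at most `n+1` members. -/
def CovDimLE (X : Type*) [TopologicalSpace X] (n : ℕ) : Prop :=
  ∀ 𝒰 : Set (Set X), (∀ U ∈ 𝒰, IsOpen U) → ⋃₀ 𝒰 = Set.univ →
    ∃ 𝒱 : Set (Set X), (∀ V ∈ 𝒱, IsOpen V) ∧ ⋃₀ 𝒱 = Set.univ ∧
      (∀ V ∈ 𝒱, ∃ U ∈ 𝒰, V ⊆ U) ∧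
      ∀ x : X, ∃ s : Finset (Set X), {V ∈ 𝒱 | x ∈ V} ⊆ ↑s ∧ s.card ≤ n + 1

/-!
An infinite virtually cyclic group `Γ` has a normal infinite cyclic subgroup `⟨t⟩` of finite
index, and the exponent of `t` in `γ` relative to a transversal is a map `τ : Γ → ℤ` with
`|τ (g * p) - τ p| = |τ g|` up to a constant: coarsely, `Γ` is the line.

Given a finite `E ⊆ Γ`, freeness gives an open `V` disjoint from its translates by a large
`τ`-ball, and minimality with compactness a closed `C ⊆ V` finitely many translates of which
cover `X`. Cover `X` by `U₀`, the points with a short translate in `V`, and `U₁`, the points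
with no short translate in `C`. Along an `E`-path in `U₀` the nearby point of the orbit in `V`
never changes, by disjointness, so the path stays bounded. An `E`-path in `U₁` moves along the
line by small steps and keeps away from the visits of its orbit to `C`, which occur on both
sides of it, so it cannot escape either. A single open set does not do, since the powers of
`t` form arbitrarily long paths in `X`.
-/

open Set Filter Topology Subgroup QuotientGroup

theorem IsVirtuallyCyclic.exists_zpowers_normal_finiteIndex {Γ : Type*} [Group Γ] [Infinite Γ]
    (h : IsVirtuallyCyclic Γ) :
    ∃ t : Γ, ¬IsOfFinOrder t ∧ (zpowers t).Normal ∧ (zpowers t).FiniteIndex := by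
  obtain ⟨H, hH, hfin⟩ := h
  obtain ⟨g, rfl⟩ := H.isCyclic_iff_exists_zpowers_eq_top.1 hH
  obtain ⟨n, hn⟩ := (le_zpowers_iff g _).1 (normalCore_le (zpowers g))
  have hnormal : (zpowers (g ^ n)).Normal := hn ▸ normalCore_normal _
  have hindex : (zpowers (g ^ n)).FiniteIndex := hn ▸ finiteIndex_normalCore _
  refine ⟨g ^ n, fun htors => ?_, hnormal, hindex⟩
  have : Finite Γ :=
    (finite_iff_finite_and_finiteIndex _).2 ⟨(finite_zpowers.2 htors).to_subtype, hindex⟩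
  exact not_finite Γ

section CosetExponent

variable {Γ : Type*} [Group Γ] {t : Γ}

theorem exists_abs_eq_one_inv_mul_zpow_mul (ht : ¬IsOfFinOrder t) [hN : (zpowers t).Normal]
    (s : Γ) : ∃ e : ℤ, |e| = 1 ∧ ∀ n : ℤ, s⁻¹ * t ^ n * s = t ^ (e * n) := by
  obtain ⟨e, he⟩ := mem_zpowers_iff.1 (hN.conj_mem t (mem_zpowers t) s⁻¹)
  obtain ⟨f, hf⟩ := mem_zpowers_iff.1 (hN.conj_mem t (mem_zpowers t) s)
  have hconj : ∀ n : ℤ, s⁻¹ * t ^ n * s = t ^ (e * n) := fun n => by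
    rw [zpow_mul, he, conj_zpow, inv_inv]
  have hef : e * f = 1 := injective_zpow_iff_not_isOfFinOrder.2 ht <| show t ^ (e * f) = t ^ 1 by
    rw [← hconj, hf, zpow_one]
    group
  exact ⟨e, Int.isUnit_iff_abs_eq.1 (.of_mul_eq_one f hef), hconj⟩

theorem out_inv_mul_mem_zpowers (t γ : Γ) : (γ : Γ ⧸ zpowers t).out⁻¹ * γ ∈ zpowers t :=
  QuotientGroup.eq.1 (out_eq' _)

/-- The exponent `n` in `γ = s * t ^ n`, where `s` is the chosen representative of `γ ⟨t⟩`. -/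
noncomputable def cosetExponent (t γ : Γ) : ℤ :=
  (mem_zpowers_iff.1 (out_inv_mul_mem_zpowers t γ)).choose

theorem out_mul_zpow_cosetExponent (t γ : Γ) :
    (γ : Γ ⧸ zpowers t).out * t ^ cosetExponent t γ = γ := by
  rw [cosetExponent, (mem_zpowers_iff.1 (out_inv_mul_mem_zpowers t γ)).choose_spec,
    mul_inv_cancel_left]

theorem cosetExponent_eq (ht : ¬IsOfFinOrder t) {γ : Γ} {n : ℤ}
    (h : (γ : Γ ⧸ zpowers t).out * t ^ n = γ) : cosetExponent t γ = n :=
  injective_zpow_iff_not_isOfFinOrder.2 ht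
    (mul_left_cancel ((out_mul_zpow_cosetExponent t γ).trans h.symm))

theorem exists_cosetExponent_mul (ht : ¬IsOfFinOrder t) [(zpowers t).Normal] (g p : Γ) :
    ∃ e : ℤ, |e| = 1 ∧ cosetExponent t (g * p) =
      cosetExponent t ((g : Γ ⧸ zpowers t).out * (p : Γ ⧸ zpowers t).out)
        + e * cosetExponent t g + cosetExponent t p := by
  set a := (g : Γ ⧸ zpowers t).out
  set b := (p : Γ ⧸ zpowers t).out
  obtain ⟨e, he, hconj⟩ := exists_abs_eq_one_inv_mul_zpow_mul ht b
  have hab : ((a * b : Γ) : Γ ⧸ zpowers t) = (g * p : Γ) := by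
    rw [QuotientGroup.mk_mul, QuotientGroup.mk_mul, out_eq', out_eq']
  refine ⟨e, he, cosetExponent_eq ht ?_⟩
  calc ((g * p : Γ) : Γ ⧸ zpowers t).out
        * t ^ (cosetExponent t (a * b) + e * cosetExponent t g + cosetExponent t p)
      = ((a * b : Γ) : Γ ⧸ zpowers t).out * t ^ cosetExponent t (a * b)
          * (b⁻¹ * t ^ cosetExponent t g * b) * t ^ cosetExponent t p := by
        rw [hab, hconj, zpow_add, zpow_add]
        group
    _ = (a * t ^ cosetExponent t g) * (b * t ^ cosetExponent t p) := by
        rw [out_mul_zpow_cosetExponent]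
        group
    _ = g * p := by rw [out_mul_zpow_cosetExponent, out_mul_zpow_cosetExponent]

theorem bddAbove_abs_cosetExponent_out_mul_out [(zpowers t).FiniteIndex] :
    BddAbove (range fun gp : Γ × Γ =>
      |cosetExponent t ((gp.1 : Γ ⧸ zpowers t).out * (gp.2 : Γ ⧸ zpowers t).out)|) := by
  refine ((finite_range fun q : (Γ ⧸ zpowers t) × (Γ ⧸ zpowers t) =>
    |cosetExponent t (q.1.out * q.2.out)|).subset ?_).bddAbove
  rintro _ ⟨⟨g, p⟩, rfl⟩
  exact ⟨((g : Γ ⧸ zpowers t), (p : Γ ⧸ zpowers t)), rfl⟩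

end CosetExponent

/-- A quasi-isometry from `Γ`, with the right-invariant metric `(a, b) ↦ |τ (a * b⁻¹)|`,
onto `ℤ`. -/
structure CoarseHeight (Γ : Type*) [Group Γ] where
  toFun : Γ → ℤ
  B : ℤ
  map_one : toFun 1 = 0
  abs_abs_sub_sub_abs_le : ∀ g p : Γ, |(|toFun (g * p) - toFun p| - |toFun g|)| ≤ B
  finite_abs_le : ∀ R : ℤ, {γ | |toFun γ| ≤ R}.Finite
  surjective : Function.Surjective toFun

namespace CoarseHeight

variable {Γ : Type*} [Group Γ]

instance : CoeFun (CoarseHeight Γ) fun _ => Γ → ℤ := ⟨CoarseHeight.toFun⟩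

theorem nonempty_of_zpowers {t : Γ} (ht : ¬IsOfFinOrder t) [(zpowers t).Normal]
    [(zpowers t).FiniteIndex] : Nonempty (CoarseHeight Γ) := by
  obtain ⟨B, hB⟩ := bddAbove_abs_cosetExponent_out_mul_out (t := t)
  set c := cosetExponent t
  refine ⟨⟨fun γ => c γ - c 1, B + |c 1|, sub_self _, fun g p => ?_, fun R => ?_, fun n => ?_⟩⟩
  · obtain ⟨e, he, hmul⟩ := exists_cosetExponent_mul ht g p
    set k := c ((g : Γ ⧸ zpowers t).out * (p : Γ ⧸ zpowers t).out)
    have hk : |k| ≤ B := hB ⟨(g, p), rfl⟩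
    replace hmul : c (g * p) = k + e * c g + c p := hmul
    have heg : |e * (c g - c 1)| = |c g - c 1| := by rw [abs_mul, he, one_mul]
    calc |(|c (g * p) - c 1 - (c p - c 1)| - |c g - c 1|)|
        = |(|c (g * p) - c p| - |e * (c g - c 1)|)| := by rw [heg, sub_sub_sub_cancel_right]
      _ ≤ |c (g * p) - c p - e * (c g - c 1)| := abs_abs_sub_abs_le_abs_sub _ _
      _ = |k + e * c 1| := by rw [hmul]; congr 1; ring
      _ ≤ |k| + |e * c 1| := abs_add_le _ _
      _ ≤ B + |c 1| := by rw [abs_mul, he, one_mul]; linarith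
  · refine ((((finite_Icc (-(R + |c 1|)) (R + |c 1|)).prod finite_univ).image
      fun q : ℤ × (Γ ⧸ zpowers t) => q.2.out * t ^ q.1).subset ?_)
    intro γ hγ
    refine ⟨(c γ, γ), ⟨?_, mem_univ _⟩, out_mul_zpow_cosetExponent t γ⟩
    have hγ' : |c γ - c 1| ≤ R := hγ
    have := abs_sub_abs_le_abs_sub (c γ) (c 1)
    exact abs_le.1 (show |c γ| ≤ R + |c 1| by linarith)
  · refine ⟨t ^ n, ?_⟩
    have hmk : ((t ^ n : Γ) : Γ ⧸ zpowers t) = ((1 : Γ) : Γ ⧸ zpowers t) :=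
      QuotientGroup.eq.2 (by simp [zpow_mem_zpowers])
    have : c (t ^ n) = c 1 + n := cosetExponent_eq ht <| by
      rw [hmk, zpow_add, ← mul_assoc, out_mul_zpow_cosetExponent, one_mul]
    simp [this]

variable (τ : CoarseHeight Γ)

theorem abs_mul_sub_le (g p : Γ) : |τ (g * p) - τ p| ≤ |τ g| + τ.B := by
  linarith [(abs_le.1 (τ.abs_abs_sub_sub_abs_le g p)).2]

theorem abs_mul_inv_le (a b : Γ) : |τ (a * b⁻¹)| ≤ |τ a - τ b| + τ.B := by
  have := (abs_le.1 (τ.abs_abs_sub_sub_abs_le (a * b⁻¹) b)).1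
  rw [inv_mul_cancel_right] at this
  linarith

end CoarseHeight

theorem lt_iff_lt_apply_zero_of_abs_sub_le {f : ℕ → ℤ} {K c : ℤ}
    (hstep : ∀ j, |f (j + 1) - f j| ≤ K) (hfar : ∀ j, K < |f j - c|) (j : ℕ) :
    c < f j ↔ c < f 0 := by
  induction j with
  | zero => rfl
  | succ j ih =>
    rw [← ih]
    have hK : 0 ≤ K := (abs_nonneg _).trans (hstep j)
    have := abs_le.1 (hstep j)
    rcases lt_abs.1 (hfar j) with h | h <;> rcases lt_abs.1 (hfar (j + 1)) with h' | h' <;>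
      constructor <;> intro <;> linarith

section Dynamics

variable {Γ X : Type*} [Group Γ] [MulAction Γ X] [TopologicalSpace X] [ContinuousConstSMul Γ X]

theorem exists_isOpen_forall_smul_notMem [T2Space X]
    (hfree : ∀ (g : Γ) (x : X), g • x = x → g = 1) (x₀ : X) {F : Set Γ} (hF : F.Finite) :
    ∃ V : Set X, IsOpen V ∧ x₀ ∈ V ∧ ∀ g ∈ F, g ≠ 1 → ∀ y ∈ V, g • y ∉ V := by
  have hsep : ∀ g : Γ, ∃ W ∈ 𝓝 x₀, g ≠ 1 → ∀ y ∈ W, g • y ∉ W := by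
    intro g
    by_cases hg : g = 1
    · exact ⟨univ, univ_mem, fun h => absurd hg h⟩
    obtain ⟨u, v, hu, hv, huv⟩ := t2_separation_nhds fun h => hg (hfree g x₀ h.symm)
    refine ⟨u ∩ (g • ·) ⁻¹' v,
      inter_mem hu ((continuous_const_smul g).continuousAt.preimage_mem_nhds hv),
      fun _ y hy hgy => disjoint_left.1 huv hgy.1 hy.2⟩
  choose W hW hWsep using hsep
  obtain ⟨V, hVW, hVo, hx₀⟩ := mem_nhds_iff.1 ((biInter_mem hF).2 fun g _ => hW g)
  refine ⟨V, hVo, hx₀, fun g hg hg1 y hy hgy => ?_⟩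
  exact hWsep g hg1 y (mem_iInter₂.1 (hVW hy) g hg) (mem_iInter₂.1 (hVW hgy) g hg)

theorem exists_isClosed_subset_forall_exists_smul_mem [CompactSpace X] [RegularSpace X]
    (hmin : ∀ x : X, Dense (MulAction.orbit Γ x)) {V : Set X} (hV : IsOpen V)
    (hne : V.Nonempty) :
    ∃ (C : Set X) (S : Finset Γ), IsClosed C ∧ C ⊆ V ∧ ∀ y : X, ∃ γ ∈ S, γ • y ∈ C := by
  obtain ⟨x₀, hx₀⟩ := hne
  obtain ⟨C, hC, hCc, hCV⟩ := exists_mem_nhds_isClosed_subset (hV.mem_nhds hx₀)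
  have hvisit : ∀ y : X, ∃ γ : Γ, γ • y ∈ interior C := fun y => by
    obtain ⟨_, ⟨γ, rfl⟩, hγ⟩ :=
      (hmin y).exists_mem_open isOpen_interior ⟨x₀, mem_interior_iff_mem_nhds.2 hC⟩
    exact ⟨γ, hγ⟩
  obtain ⟨S, hS⟩ := isCompact_univ.elim_finite_subcover (fun γ : Γ => (γ • ·) ⁻¹' interior C)
    (fun γ => isOpen_interior.preimage (continuous_const_smul γ))
    (fun y _ => mem_iUnion.2 (hvisit y))
  refine ⟨C, S, hCc, hCV, fun y => ?_⟩
  obtain ⟨γ, hγS, hγ⟩ := mem_iUnion₂.1 (hS (mem_univ y))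
  exact ⟨γ, hγS, interior_subset hγ⟩

theorem isOpen_setOf_exists_smul_mem (P : Γ → Prop) {V : Set X} (hV : IsOpen V) :
    IsOpen {y : X | ∃ γ, P γ ∧ γ • y ∈ V} := by
  have : {y : X | ∃ γ, P γ ∧ γ • y ∈ V} = ⋃ γ ∈ {γ | P γ}, (γ • ·) ⁻¹' V := by
    ext; simp
  rw [this]
  exact isOpen_biUnion fun γ _ => hV.preimage (continuous_const_smul γ)

theorem isOpen_setOf_forall_smul_notMem {P : Γ → Prop} (hP : {γ | P γ}.Finite) {C : Set X}
    (hC : IsClosed C) : IsOpen {y : X | ∀ γ, P γ → γ • y ∉ C} := by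
  have : {y : X | ∀ γ, P γ → γ • y ∉ C} = ⋂ γ ∈ {γ | P γ}, (γ • ·) ⁻¹' Cᶜ := by
    ext; simp
  rw [this]
  exact hP.isOpen_biInter fun γ _ => hC.isOpen_compl.preimage (continuous_const_smul γ)

end Dynamics

section DynF

variable {Γ X : Type*} [Group Γ] [MulAction Γ X]

theorem exists_path_of_mem_dynF {U : Set X} {E : Set Γ} {g : Γ} (hg : g ∈ dynF U E) :
    ∃ (p : ℕ → Γ) (x : X) (n : ℕ), p 0 = 1 ∧ p n = g ∧
      (∀ j, ∃ h ∈ insert 1 E, p (j + 1) = h * p j) ∧ ∀ j, p j • x ∈ U := by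
  obtain ⟨L, hL, hLE, rfl, x, hx, hpath⟩ := hg
  refine ⟨fun j => (L.take j).reverse.prod, x, L.length, by simp, by simp, fun j => ?_,
    fun j => ?_⟩
  · beta_reduce
    rw [List.take_add_one]
    rcases hj : L[j]? with _ | h
    · exact ⟨1, mem_insert 1 E, by simp⟩
    · exact ⟨h, mem_insert_of_mem 1 (hLE h (List.mem_of_getElem? hj)), by simp⟩
  · rcases Nat.eq_zero_or_pos j with rfl | hj
    · simpa using hx
    rcases le_total j L.length with hjL | hLj
    · exact hpath j hj hjL
    · beta_reduce
      rw [List.take_of_length_le hLj]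
      simpa using hpath _ (List.length_pos_iff.2 hL) le_rfl

theorem pow_succ_mem_dynF_univ [Nonempty X] {E : Set Γ} {g : Γ} (hg : g ∈ E) (n : ℕ) :
    g ^ (n + 1) ∈ dynF (univ : Set X) E :=
  ⟨List.replicate (n + 1) g, by simp, fun h hh => List.eq_of_mem_replicate hh ▸ hg,
    by simp [List.prod_replicate], Classical.arbitrary X, trivial, fun _ _ _ => trivial⟩

end DynF

namespace CoarseHeight

variable {Γ X : Type*} [Group Γ] [MulAction Γ X] (τ : CoarseHeight Γ)

theorem finite_dynF_of_forall_path {U : Set X} {E : Set Γ} {K R : ℤ}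
    (hK : ∀ h ∈ insert 1 E, ∀ p, |τ (h * p) - τ p| ≤ K)
    (hR : ∀ (p : ℕ → Γ) (x : X), p 0 = 1 → (∀ j, |τ (p (j + 1)) - τ (p j)| ≤ K) →
      (∀ j, p j • x ∈ U) → ∀ j, |τ (p j)| ≤ R) :
    (dynF U E).Finite := by
  refine (τ.finite_abs_le R).subset fun g hg => ?_
  obtain ⟨p, x, n, hp0, rfl, hstep, hpU⟩ := exists_path_of_mem_dynF hg
  refine hR p x hp0 (fun j => ?_) hpU n
  obtain ⟨h, hh, hj⟩ := hstep j
  exact hj ▸ hK h hh _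

theorem exists_forall_exists_smul_mem_abs_sub_le {C : Set X} {S : Finset Γ}
    (hS : ∀ y : X, ∃ γ ∈ S, γ • y ∈ C) :
    ∃ D, ∀ (x : X) (m : ℤ), ∃ η : Γ, η • x ∈ C ∧ |τ η - m| ≤ D := by
  obtain ⟨N, hN⟩ := (S.finite_toSet.image fun g => |τ g|).bddAbove
  refine ⟨N + τ.B, fun x m => ?_⟩
  obtain ⟨q, rfl⟩ := τ.surjective m
  obtain ⟨γ, hγS, hγ⟩ := hS (q • x)
  refine ⟨γ * q, by rwa [mul_smul], ?_⟩
  linarith [τ.abs_mul_sub_le γ q, hN (mem_image_of_mem _ hγS)]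

variable {p : ℕ → Γ} {K : ℤ} (hp0 : p 0 = 1) (hstep : ∀ j, |τ (p (j + 1)) - τ (p j)| ≤ K)
include hp0 hstep

/-- The translate of the path into `V` never changes, as `V` misses its short translates. -/
theorem abs_le_of_forall_exists_smul_mem {V : Set X} {W : ℤ}
    (hV : ∀ g, |τ g| ≤ 2 * (W + τ.B) + K + τ.B → g ≠ 1 → ∀ y ∈ V, g • y ∉ V) {x : X}
    (hpV : ∀ j, ∃ γ, |τ γ| ≤ W ∧ γ • p j • x ∈ V) (j : ℕ) : |τ (p j)| ≤ 2 * (W + τ.B) := by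
  choose w hw hwV using hpV
  have hnear : ∀ j, |τ (w j * p j) - τ (p j)| ≤ W + τ.B := fun j => by
    linarith [τ.abs_mul_sub_le (w j) (p j), hw j]
  have hconst : ∀ j, w (j + 1) * p (j + 1) = w j * p j := fun j => by
    by_contra hne
    refine hV _ ?_ (by rwa [Ne, mul_inv_eq_one]) _ (hwV j) ?_
    · have hdist := τ.abs_mul_inv_le (w (j + 1) * p (j + 1)) (w j * p j)
      have htri₁ := abs_sub_le (τ (w (j + 1) * p (j + 1))) (τ (p (j + 1))) (τ (w j * p j))
      have htri₂ := abs_sub_le (τ (p (j + 1))) (τ (p j)) (τ (w j * p j))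
      rw [abs_sub_comm (τ (p j))] at htri₂
      linarith [hnear j, hnear (j + 1), hstep j]
    · rw [← mul_smul (w j), smul_smul, inv_mul_cancel_right, mul_smul]
      exact hwV (j + 1)
  have hanchor : ∀ j, w j * p j = w 0 * p 0 := fun j =>
    Nat.rec rfl (fun j ih => (hconst j).trans ih) j
  have hj := hnear j
  rw [hanchor j, abs_sub_comm] at hj
  have h0 := hnear 0
  rw [show τ (p 0) = 0 from hp0 ▸ τ.map_one, sub_zero] at h0
  have htri := abs_add_le (τ (p j) - τ (w 0 * p 0)) (τ (w 0 * p 0))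
  rw [sub_add_cancel] at htri
  linarith

/-- A path with no short translate in `C` cannot cross the visits of the orbit to `C`. -/
theorem abs_le_of_forall_smul_notMem {C : Set X} {D : ℤ} {x : X}
    (hC : ∀ m : ℤ, ∃ η : Γ, η • x ∈ C ∧ |τ η - m| ≤ D)
    (hpC : ∀ j γ, |τ γ| ≤ K + τ.B → γ • p j • x ∉ C) (j : ℕ) : |τ (p j)| ≤ 2 * D + 1 := by
  have hfar : ∀ η : Γ, η • x ∈ C → ∀ j, K < |τ (p j) - τ η| := fun η hη j => by
    by_contra! h
    refine hpC j (η * (p j)⁻¹) ?_ (by rwa [smul_smul, inv_mul_cancel_right])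
    linarith [τ.abs_mul_inv_le η (p j), abs_sub_comm (τ η) (τ (p j))]
  have hside : ∀ η : Γ, η • x ∈ C → (τ η < τ (p j) ↔ τ η < 0) := fun η hη => by
    rw [lt_iff_lt_apply_zero_of_abs_sub_le (f := fun j => τ (p j)) hstep (hfar η hη) j, hp0,
      τ.map_one]
  obtain ⟨η₁, hη₁, h₁⟩ := hC (D + 1)
  obtain ⟨η₂, hη₂, h₂⟩ := hC (-(D + 1))
  rw [abs_le] at h₁ h₂ ⊢
  have hlt₂ := (hside η₂ hη₂).2 (by linarith)
  have hle₁ := le_of_not_gt (mt (hside η₁ hη₁).1 (by linarith))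
  constructor <;> linarith

end CoarseHeight

theorem dadLE_one_of_coarseHeight {Γ X : Type*} [Group Γ] [MulAction Γ X] [TopologicalSpace X]
    [CompactSpace X] [T2Space X] [Nonempty X] [ContinuousConstSMul Γ X] (τ : CoarseHeight Γ)
    (hfree : ∀ (g : Γ) (x : X), g • x = x → g = 1)
    (hmin : ∀ x : X, Dense (MulAction.orbit Γ x)) : DadLE Γ X 1 := by
  intro E
  obtain ⟨N, hN⟩ := ((E.finite_toSet.insert 1).image fun g => |τ g|).bddAbove
  set K := N + τ.B
  set W := K + τ.B
  have hK : ∀ h ∈ insert 1 (E : Set Γ), ∀ p, |τ (h * p) - τ p| ≤ K := fun h hh p => by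
    linarith [τ.abs_mul_sub_le h p, hN (mem_image_of_mem _ hh)]
  obtain ⟨x₀⟩ := ‹Nonempty X›
  obtain ⟨V, hVo, hx₀, hV⟩ :=
    exists_isOpen_forall_smul_notMem hfree x₀ (τ.finite_abs_le (2 * (W + τ.B) + K + τ.B))
  obtain ⟨C, S, hCc, hCV, hS⟩ := exists_isClosed_subset_forall_exists_smul_mem hmin hVo ⟨x₀, hx₀⟩
  obtain ⟨D, hD⟩ := τ.exists_forall_exists_smul_mem_abs_sub_le hS
  refine ⟨![{y | ∃ γ, |τ γ| ≤ W ∧ γ • y ∈ V}, {y | ∀ γ, |τ γ| ≤ W → γ • y ∉ C}],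
    Fin.forall_fin_two.2 ⟨isOpen_setOf_exists_smul_mem _ hVo,
      isOpen_setOf_forall_smul_notMem (τ.finite_abs_le W) hCc⟩, ?_,
    Fin.forall_fin_two.2 ⟨τ.finite_dynF_of_forall_path hK fun p x hp0 hstep hpU =>
      τ.abs_le_of_forall_exists_smul_mem hp0 hstep hV hpU,
      τ.finite_dynF_of_forall_path hK fun p x hp0 hstep hpU =>
      τ.abs_le_of_forall_smul_notMem hp0 hstep (hD x) hpU⟩⟩
  refine eq_univ_of_forall fun y => ?_
  by_cases hy : ∀ γ, |τ γ| ≤ W → γ • y ∉ C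
  · exact mem_iUnion.2 ⟨1, hy⟩
  · simp only [not_forall, not_not] at hy
    obtain ⟨γ, hγ, hγC⟩ := hy
    exact mem_iUnion.2 ⟨0, γ, hγ, hCV hγC⟩

section DynamicAsymptoticDimension

variable {Γ X : Type*} [Group Γ] [MulAction Γ X] [TopologicalSpace X]

theorem not_dadLE_zero [Nonempty X] {t : Γ} (ht : ¬IsOfFinOrder t) : ¬DadLE Γ X 0 := by
  intro h
  obtain ⟨U, -, hU, hfin⟩ := h {t}
  have hU0 : U 0 = univ := by simpa [eq_univ_iff_forall, Fin.exists_fin_one] using hU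
  refine infinite_of_injective_forall_mem ((injective_pow_iff_not_isOfFinOrder.2 ht).comp
    (add_left_injective 1)) (fun n => ?_) (hfin 0)
  rw [hU0]
  exact pow_succ_mem_dynF_univ (by simp) n

theorem dad_eq_one (h₁ : DadLE Γ X 1) (h₀ : ¬DadLE Γ X 0) : dad Γ X = 1 := by
  refine le_antisymm (sInf_le ⟨1, h₁, rfl⟩) (le_sInf ?_)
  rintro _ ⟨_ | d, hd, rfl⟩
  · exact absurd hd h₀
  · show (1 : ℕ∞) ≤ ((d + 1 : ℕ) : ℕ∞)
    exact_mod_cast Nat.le_add_left 1 d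

end DynamicAsymptoticDimension

/-- For a free minimal action of an infinite virtually cyclic group on a
nonempty compact Hausdorff space, the dynamic asymptotic dimension equals 1. -/
theorem dad_eq_one_of_free_minimal
    (Γ X : Type*) [Group Γ] [Infinite Γ]
    [TopologicalSpace X] [CompactSpace X] [T2Space X] [Nonempty X]
    [MulAction Γ X] [ContinuousConstSMul Γ X]
    (hvc : IsVirtuallyCyclic Γ)
    (hfree : ∀ (g : Γ) (x : X), g • x = x → g = 1)
    (hmin : ∀ x : X, Dense (MulAction.orbit Γ x)) :
    dad Γ X = 1 := by
  obtain ⟨t, ht, _, _⟩ := hvc.exists_zpowers_normal_finiteIndex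
  obtain ⟨τ⟩ := CoarseHeight.nonempty_of_zpowers ht
  exact dad_eq_one (dadLE_one_of_coarseHeight τ hfree hmin) (not_dadLE_zero ht)
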